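/- arXiv:0905.1971 — 4 statements merged into one kernel-verified Lean document; each statement's English description precedes it below -/
import Mathlib

section
/- Let f : ℝ → ℝ be twice continuously differentiable. Define φ²(t,a) := (2πt)^{-1/2} · exp( (a − f(t))²/(2t) − (1/2)∫₀ᵗ f′(u)² du + f′(t)·a ) for t > 0 and a ∈ ℝ. Then φ² solves the backward Schrödinger equation with time-dependent linear potential: for all t > 0 and a ∈ ℝ, −∂_t φ²(t,a) = (1/2) ∂²_{aa} φ²(t,a) − a·f″(t)·φ²(t,a). -/
/-!
Write `φ²(t, a) = C(t) · exp (g(t, a))`. Since `∂_a φ² = g_a φ²` and `∂²_{aa} φ² = (g_a² + g_aa) φ²`, while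
`∂_t φ² = (C'/C + g_t) φ²`, the equation reduces to the identity `−C'/C − g_t = ½ (g_a² + g_aa) − a f″`
between explicit rational expressions in `t`, `a − f(t)`, `f′(t)` and `f″(t)`; the derivative of the
integral term is `f′(t)²` by the fundamental theorem of calculus.
-/

open Real

/-- The exponent `g(t, a)` of `φ²(t, a) = (2πt)^{-1/2} exp (g(t, a))`. -/
noncomputable def schrodingerExponent (f : ℝ → ℝ) (t a : ℝ) : ℝ :=
  (a - f t) ^ 2 / (2 * t) - (1/2) * (∫ u in (0:ℝ)..t, (deriv f u) ^ 2) + deriv f t * a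

lemma hasDerivAt_mul_rpow_const {c x : ℝ} (p : ℝ) (hx : 0 < c * x) :
    HasDerivAt (fun s => (c * s) ^ p) (p * (c * x) ^ p / x) x := by
  obtain ⟨hc0, hx0⟩ := mul_ne_zero_iff.mp hx.ne'
  refine (((hasDerivAt_id x).const_mul c).rpow_const (p := p) (Or.inl hx.ne')).congr_deriv ?_
  simp only [id, mul_one]
  rw [Real.rpow_sub hx, Real.rpow_one]
  field_simp

lemma deriv_deriv_const_mul_exp {g g' : ℝ → ℝ} {g'' : ℝ} (K a : ℝ)
    (hg : ∀ b, HasDerivAt g (g' b) b) (hg' : HasDerivAt g' g'' a) :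
    deriv (deriv fun b => K * exp (g b)) a = K * exp (g a) * (g' a ^ 2 + g'') := by
  have hd : deriv (fun b => K * exp (g b)) = fun b => K * exp (g b) * g' b :=
    funext fun b => (((hg b).exp).const_mul K).deriv.trans (by ring)
  rw [hd]
  exact ((((hg a).exp).const_mul K).mul hg').deriv.trans (by ring)

lemma hasDerivAt_schrodingerExponent_right (f : ℝ → ℝ) {t : ℝ} (ht : t ≠ 0) (a : ℝ) :
    HasDerivAt (schrodingerExponent f t) ((a - f t) / t + deriv f t) a := by
  have hsq := (((hasDerivAt_id a).sub_const (f t)).pow 2).div_const (2 * t)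
  refine ((hsq.sub_const _).add ((hasDerivAt_id a).const_mul (deriv f t))).congr_deriv ?_
  simp only [id, Nat.cast_ofNat]
  field_simp
  ring

lemma hasDerivAt_schrodingerExponent_left {f : ℝ → ℝ} (hf : ContDiff ℝ 2 f) {t : ℝ} (ht : t ≠ 0)
    (a : ℝ) :
    HasDerivAt (fun s => schrodingerExponent f s a)
      (-((a - f t) * deriv f t) / t - (a - f t) ^ 2 / (2 * t ^ 2) - deriv f t ^ 2 / 2
        + deriv (deriv f) t * a) t := by
  have hf' : ContDiff ℝ 1 (deriv f) := hf.deriv'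
  have hfd : HasDerivAt f (deriv f t) t := (hf.differentiable (by norm_num) t).hasDerivAt
  have hf'd : HasDerivAt (deriv f) (deriv (deriv f) t) t :=
    (hf'.differentiable (by norm_num) t).hasDerivAt
  have hint : HasDerivAt (fun s => ∫ u in (0:ℝ)..s, (deriv f u) ^ 2) (deriv f t ^ 2) t :=
    ((hf'.continuous.pow 2).integral_hasStrictDerivAt 0 t).hasDerivAt
  have hsq := ((hfd.const_sub a).pow 2).div ((hasDerivAt_id t).const_mul 2) (by simpa using ht)
  refine ((hsq.sub (hint.const_mul (1/2))).add (hf'd.mul_const a)).congr_deriv ?_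
  simp only [id, Nat.cast_ofNat, Pi.pow_apply]
  field_simp
  ring

/-- The function
`φ²(t,a) = (2πt)^{-1/2} · exp((a − f(t))²/(2t) − (1/2)∫₀ᵗ f′(u)² du + f′(t)·a)`
solves the backward Schrödinger equation with time-dependent linear potential:
`−∂_t φ²(t,a) = (1/2) ∂²_{aa} φ²(t,a) − a·f″(t)·φ²(t,a)` for all `t > 0`, `a ∈ ℝ`. -/
theorem stmt_0 (f : ℝ → ℝ) (hf : ContDiff ℝ 2 f)
    (φ₂ : ℝ → ℝ → ℝ)
    (hφ₂ : ∀ t a : ℝ, 0 < t →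
      φ₂ t a = (2 * Real.pi * t) ^ (-(1:ℝ)/2) *
        Real.exp ((a - f t) ^ 2 / (2 * t)
          - (1/2) * (∫ u in (0:ℝ)..t, (deriv f u) ^ 2) + deriv f t * a)) :
    ∀ t a : ℝ, 0 < t →
      -(deriv (fun t' => φ₂ t' a) t) =
        (1/2) * deriv (deriv (fun a' => φ₂ t a')) a
          - a * deriv (deriv f) t * φ₂ t a := by
  intro t a ht
  have hφ : ∀ s b, 0 < s → φ₂ s b = (2 * π * s) ^ (-(1:ℝ)/2) * exp (schrodingerExponent f s b) :=
    hφ₂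
  have h_time := ((hasDerivAt_mul_rpow_const (-(1:ℝ)/2) (by positivity : 0 < 2 * π * t)).mul
    (hasDerivAt_schrodingerExponent_left hf ht.ne' a).exp).congr_of_eventuallyEq
      (f₁ := fun t' => φ₂ t' a) <| by
    filter_upwards [eventually_gt_nhds ht] with s hs using hφ s a hs
  have h_space : (fun a' => φ₂ t a') =
      fun b => (2 * π * t) ^ (-(1:ℝ)/2) * exp (schrodingerExponent f t b) :=
    funext fun b => hφ t b ht
  rw [h_time.deriv, h_space,
    deriv_deriv_const_mul_exp _ a (hasDerivAt_schrodingerExponent_right f ht.ne')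
      ((((hasDerivAt_id a).sub_const (f t)).div_const t).add_const (deriv f t)),
    hφ t a ht]
  field_simp
  ring
end

section
/- Let f : ℝ → ℝ be twice continuously differentiable. Define ψ̃²(τ,b) := (2πτ)^{-1/2} · exp( −(b − f(τ))²/(2τ) + (1/2)∫₀^τ f′(u)² du − f′(τ)·b ) for τ > 0 and b ∈ ℝ. Then ψ̃² solves the forward Schrödinger equation with time-dependent linear potential: for all τ > 0 and b ∈ ℝ, ∂_τ ψ̃²(τ,b) = (1/2) ∂²_{bb} ψ̃²(τ,b) − b·f″(τ)·ψ̃²(τ,b). -/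
/-!
Write `ψ̃² = exp S`. Since `∂_b e^S = e^S ∂_b S` and `∂²_b e^S = e^S ((∂_b S)² + ∂²_b S)`, the
equation for `ψ̃²` is equivalent to the viscous Hamilton–Jacobi equation
`∂_τ S = ½ ((∂_b S)² + ∂²_b S) - b f''(τ)` (Hopf–Cole), which is checked directly on the explicit
phase; the term `½ ∫₀^τ f'²` is there to produce the `½ f'(τ)²` of `½ (∂_b S)²`.
-/

open Real Topology

/-- `log ψ̃²`, with the Gaussian prefactor `(2πt)^{-1/2}` moved into the exponent. -/
noncomputable def logKernel (f : ℝ → ℝ) (t x : ℝ) : ℝ :=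
  -(1/2) * log (2 * π * t) - (x - f t) ^ 2 / (2 * t)
    + (1/2) * (∫ u in (0:ℝ)..t, deriv f u ^ 2) - deriv f t * x

lemma rpow_mul_exp_eq_exp_logKernel (f : ℝ → ℝ) {t : ℝ} (ht : 0 < t) (x : ℝ) :
    (2 * π * t) ^ (-(1:ℝ)/2) *
      exp (-(x - f t) ^ 2 / (2 * t) + (1/2) * (∫ u in (0:ℝ)..t, deriv f u ^ 2) - deriv f t * x)
      = exp (logKernel f t x) := by
  rw [rpow_def_of_pos (by positivity), ← exp_add, logKernel]
  ring_nf

lemma hasDerivAt_logKernel_space (f : ℝ → ℝ) (t x : ℝ) :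
    HasDerivAt (logKernel f t) (-(x - f t) / t - deriv f t) x := by
  refine (((((hasDerivAt_id' x).sub_const (f t)).fun_pow 2).div_const (2 * t)).const_sub
    (-(1/2) * log (2 * π * t)) |>.add_const ((1/2) * (∫ u in (0:ℝ)..t, deriv f u ^ 2))
    |>.fun_sub ((hasDerivAt_id' x).const_mul (deriv f t))).congr_deriv ?_
  by_cases ht : t = 0
  · simp [ht]
  · field_simp
    ring

lemma hasDerivAt_logKernel_time {f : ℝ → ℝ} (hf : ContDiff ℝ 2 f) {t : ℝ} (ht : 0 < t)
    (x : ℝ) :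
    HasDerivAt (fun s => logKernel f s x)
      ((1/2) * ((-(x - f t) / t - deriv f t) ^ 2 - 1 / t) - x * deriv (deriv f) t) t := by
  have hlog : HasDerivAt (fun s => log (2 * π * s)) (1 / t) t := by
    refine (((hasDerivAt_id' t).const_mul (2 * π)).log (by positivity)).congr_deriv ?_
    field_simp
  have hsq : HasDerivAt (fun s => (x - f s) ^ 2 / (2 * s))
      ((2 * (x - f t) * (-deriv f t) * (2 * t) - (x - f t) ^ 2 * 2) / (2 * t) ^ 2) t := by
    have hf_t := (hf.differentiable (by norm_num) t).hasDerivAt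
    refine ((((hasDerivAt_const t x).fun_sub hf_t).fun_pow 2).fun_div
      ((hasDerivAt_id' t).const_mul 2) (by positivity)).congr_deriv ?_
    simp
  have hint : HasDerivAt (fun s => ∫ u in (0:ℝ)..s, deriv f u ^ 2) (deriv f t ^ 2) t :=
    ((hf.continuous_deriv (by norm_num)).pow 2).integral_hasStrictDerivAt 0 t |>.hasDerivAt
  have hlin : HasDerivAt (fun s => deriv f s * x) (deriv (deriv f) t * x) t :=
    (hf.differentiable_deriv_two t).hasDerivAt.mul_const x
  refine (((hlog.const_mul (-(1/2))).fun_sub hsq).fun_add (hint.const_mul (1/2))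
    |>.fun_sub hlin).congr_deriv ?_
  field_simp
  ring

lemma deriv_deriv_exp_comp {g g' : ℝ → ℝ} {g'' x : ℝ} (hg : ∀ y, HasDerivAt g (g' y) y)
    (hg' : HasDerivAt g' g'' x) :
    deriv (deriv fun y => exp (g y)) x = exp (g x) * (g' x ^ 2 + g'') := by
  have hd : deriv (fun y => exp (g y)) = fun y => exp (g y) * g' y :=
    funext fun y => (hg y).exp.deriv
  rw [hd, ((hg x).exp.fun_mul hg').deriv]
  ring

/-- The function
`ψ̃²(τ,b) = (2πτ)^{-1/2} · exp(−(b − f(τ))²/(2τ) + (1/2)∫₀^τ f′(u)² du − f′(τ)·b)`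
solves the forward Schrödinger equation with time-dependent linear potential:
`∂_τ ψ̃²(τ,b) = (1/2) ∂²_{bb} ψ̃²(τ,b) − b·f″(τ)·ψ̃²(τ,b)` for all `τ > 0`, `b ∈ ℝ`. -/
theorem stmt_1 (f : ℝ → ℝ) (hf : ContDiff ℝ 2 f)
    (ψ₂ : ℝ → ℝ → ℝ)
    (hψ₂ : ∀ τ b : ℝ, 0 < τ →
      ψ₂ τ b = (2 * Real.pi * τ) ^ (-(1:ℝ)/2) *
        Real.exp (-(b - f τ) ^ 2 / (2 * τ)
          + (1/2) * (∫ u in (0:ℝ)..τ, (deriv f u) ^ 2) - deriv f τ * b)) :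
    ∀ τ b : ℝ, 0 < τ →
      deriv (fun τ' => ψ₂ τ' b) τ =
        (1/2) * deriv (deriv (fun b' => ψ₂ τ b')) b
          - b * deriv (deriv f) τ * ψ₂ τ b := by
  intro τ b hτ
  have hψ : ∀ t x, 0 < t → ψ₂ t x = exp (logKernel f t x) := fun t x ht => by
    rw [hψ₂ t x ht, rpow_mul_exp_eq_exp_logKernel f ht]
  have hψ_time : (fun τ' => ψ₂ τ' b) =ᶠ[𝓝 τ] fun τ' => exp (logKernel f τ' b) := by
    filter_upwards [Ioi_mem_nhds hτ] with t ht using hψ t b ht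
  have hψ_space : (fun b' => ψ₂ τ b') = fun b' => exp (logKernel f τ b') :=
    funext fun x => hψ τ x hτ
  have hspace₂ : HasDerivAt (fun x => -(x - f τ) / τ - deriv f τ) (-1 / τ) b := by
    simpa using (((hasDerivAt_id b).sub_const (f τ)).neg.div_const τ).sub_const (deriv f τ)
  rw [hψ_time.deriv_eq, (hasDerivAt_logKernel_time hf hτ b).exp.deriv, hψ_space,
    deriv_deriv_exp_comp (hasDerivAt_logKernel_space f τ) hspace₂, hψ τ b hτ]
  ring
end

section
/- Let f : ℝ → ℝ be twice continuously differentiable. For 0 ≤ t < τ and a, b ∈ ℝ define H(t,a;τ,b) := (2π(τ−t))^{-1/2} · exp( (1/2)∫_t^τ f′(u)² du − f′(τ)·b + f′(t)·a ) · [ exp( −(b − a − ∫_t^τ f′(u) du)²/(2(τ−t)) ) − exp( −(b + a − ∫_t^τ f′(u) du)²/(2(τ−t)) ) ]. Then for every τ > 0, every a > 0, and every bounded continuous function g : [0,∞) → ℝ, the integral ∫₀^∞ H(t,a;τ,b)·g(b) db converges to g(a) as t → τ from the left. -/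
open MeasureTheory ProbabilityTheory Real Filter Topology Set
open scoped NNReal

/-!
Writing `m = ∫_t^τ f'` and `v = τ - t`, the only `b`-dependence of the exponential prefactor of
`H(t,a;τ,b)` is `e^{-f'(τ) b}`, so `H` is the constant `e^{½∫_t^τ f'² + f'(t) a}` times
`e^{-f'(τ) b}` times the difference of the Gaussian densities of variance `v` centred at `a + m`
and at `m - a`. Hence `∫₀^∞ H g` is that constant times the difference of the expectations of
`ψ(b) = e^{-f'(τ) b} g(b) 1_{b > 0}` under these two Gaussians. As `t → τ` they concentrate at `a`
and at `-a`; since `ψ` grows at most exponentially and is continuous at both points, with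
`ψ(-a) = 0`, dominated convergence sends the expectations to `e^{-f'(τ) a} g(a)` and `0`, while
the constant tends to `e^{f'(τ) a}`.
-/

lemma gaussianReal_eq_map_standard (μ : ℝ) (v : ℝ≥0) :
    gaussianReal μ v = (gaussianReal 0 1).map (fun z => μ + √v * z) := by
  have : (fun z => μ + √v * z) = (μ + ·) ∘ (√v * ·) := rfl
  rw [this, ← Measure.map_map (by fun_prop) (by fun_prop), gaussianReal_map_const_mul,
    gaussianReal_map_const_add]
  congr 1
  · ring
  · ext; simp

lemma integrable_exp_mul_abs_gaussianReal (μ : ℝ) (v : ℝ≥0) (K : ℝ) :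
    Integrable (fun x => exp (K * |x|)) (gaussianReal μ v) := by
  refine ((integrable_exp_mul_gaussianReal K).add (integrable_exp_mul_gaussianReal (-K))).mono'
    (by fun_prop) (ae_of_all _ fun x => ?_)
  rw [norm_of_nonneg (exp_pos _).le, Pi.add_apply]
  rcases le_total 0 x with hx | hx
  · rw [abs_of_nonneg hx]; linarith [exp_pos (-K * x)]
  · rw [abs_of_nonpos hx, mul_neg, ← neg_mul]; linarith [exp_pos (K * x)]

lemma integrable_gaussianReal_of_abs_le_mul_exp_abs {μ : ℝ} {v : ℝ≥0} {ψ : ℝ → ℝ}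
    (hψ : AEStronglyMeasurable ψ (gaussianReal μ v)) {C K : ℝ}
    (hbound : ∀ y, |ψ y| ≤ C * exp (K * |y|)) : Integrable ψ (gaussianReal μ v) :=
  ((integrable_exp_mul_abs_gaussianReal μ v K).const_mul C).mono' hψ (ae_of_all _ hbound)

theorem tendsto_integral_gaussianReal_of_continuousAt {ι : Type*} {l : Filter ι}
    [l.IsCountablyGenerated] {μ : ι → ℝ} {v : ι → ℝ≥0} {x₀ : ℝ} (hμ : Tendsto μ l (𝓝 x₀))
    (hv : Tendsto v l (𝓝 0)) {ψ : ℝ → ℝ} (hψ : Measurable ψ) {C K : ℝ} (hK : 0 ≤ K)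
    (hbound : ∀ y, |ψ y| ≤ C * exp (K * |y|)) (hx₀ : ContinuousAt ψ x₀) :
    Tendsto (fun i => ∫ y, ψ y ∂gaussianReal (μ i) (v i)) l (𝓝 (ψ x₀)) := by
  have hC : 0 ≤ C := nonneg_of_mul_nonneg_left ((abs_nonneg _).trans (hbound 0)) (exp_pos _)
  have hs : Tendsto (fun i => √(v i : ℝ)) l (𝓝 0) := by
    simpa using ((NNReal.continuous_coe.tendsto 0).comp hv).sqrt
  have h_std : ∀ i, ∫ y, ψ y ∂gaussianReal (μ i) (v i)
      = ∫ z, ψ (μ i + √(v i : ℝ) * z) ∂gaussianReal 0 1 := fun i => by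
    rw [gaussianReal_eq_map_standard, integral_map (by fun_prop) hψ.aestronglyMeasurable]
  simp only [h_std]
  have h_const : ∫ _, ψ x₀ ∂gaussianReal 0 1 = ψ x₀ := by simp
  rw [← h_const]
  refine tendsto_integral_filter_of_dominated_convergence
    (fun z => C * exp (K * (|x₀| + 1)) * exp (K * |z|))
    (Eventually.of_forall fun i => (hψ.comp (by fun_prop)).aestronglyMeasurable) ?_
    ((integrable_exp_mul_abs_gaussianReal 0 1 K).const_mul _) (ae_of_all _ fun z => ?_)
  · have hμ' : ∀ᶠ i in l, |μ i| ≤ |x₀| + 1 :=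
      ((continuous_abs.tendsto x₀).comp hμ).eventually_le_const (lt_add_one _)
    have hs' : ∀ᶠ i in l, √(v i : ℝ) ≤ 1 := hs.eventually_le_const one_pos
    filter_upwards [hμ', hs'] with i hμi hsi
    refine ae_of_all _ fun z => (hbound _).trans ?_
    rw [mul_assoc, ← exp_add, ← mul_add]
    gcongr
    calc |μ i + √(v i : ℝ) * z| ≤ |μ i| + √(v i : ℝ) * |z| := by
          simpa [abs_mul, abs_of_nonneg (sqrt_nonneg _)] using abs_add_le (μ i) (√(v i : ℝ) * z)
      _ ≤ |x₀| + 1 + 1 * |z| := by gcongr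
      _ = _ := by ring
  · exact hx₀.tendsto.comp (by simpa using hμ.add (hs.mul_const z))

noncomputable def expTiltIoi (q : ℝ) (g : ℝ → ℝ) : ℝ → ℝ :=
  (Ioi 0).indicator fun b => exp (-q * b) * g b

section expTiltIoi

variable {q : ℝ} {g : ℝ → ℝ}

lemma measurable_expTiltIoi (hg : ContinuousOn g (Ioi 0)) : Measurable (expTiltIoi q g) := by
  classical
  rw [expTiltIoi, ← piecewise_eq_indicator]
  exact ContinuousOn.measurable_piecewise (by fun_prop) continuousOn_const measurableSet_Ioi

lemma abs_expTiltIoi_le {M : ℝ} (hM : ∀ b ∈ Ioi 0, |g b| ≤ M) (y : ℝ) :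
    |expTiltIoi q g y| ≤ M * exp (|q| * |y|) := by
  have hM0 : 0 ≤ M := (abs_nonneg _).trans (hM 1 (mem_Ioi.2 one_pos))
  by_cases hy : y ∈ Ioi 0
  · rw [expTiltIoi, indicator_of_mem hy, abs_mul, abs_of_pos (exp_pos _), mul_comm]
    refine mul_le_mul (hM y hy) (exp_le_exp.2 ?_) (exp_pos _).le hM0
    rw [neg_mul, ← abs_mul]
    exact neg_le_abs _
  · rw [expTiltIoi, indicator_of_notMem hy, abs_zero]
    positivity

lemma continuousAt_expTiltIoi_of_pos (hg : ContinuousOn g (Ioi 0)) {x : ℝ} (hx : 0 < x) :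
    ContinuousAt (expTiltIoi q g) x := by
  have hg' : ContinuousAt g x := hg.continuousAt (Ioi_mem_nhds hx)
  refine ContinuousAt.congr (f := fun y => exp (-q * y) * g y) (by fun_prop) ?_
  filter_upwards [Ioi_mem_nhds hx] with y hy
  rw [expTiltIoi, indicator_of_mem hy]

lemma continuousAt_expTiltIoi_of_neg {x : ℝ} (hx : x < 0) :
    ContinuousAt (expTiltIoi q g) x := by
  refine continuousAt_const.congr (f := fun _ => (0 : ℝ)) ?_
  filter_upwards [Iio_mem_nhds hx] with y hy
  rw [expTiltIoi, indicator_of_notMem (notMem_Ioi.2 hy.le)]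

end expTiltIoi

lemma integrable_gaussianPDFReal_mul {μ : ℝ} {v : ℝ≥0} (hv : v ≠ 0) {ψ : ℝ → ℝ}
    (hψ : Integrable ψ (gaussianReal μ v)) : Integrable fun x => gaussianPDFReal μ v x * ψ x := by
  rw [gaussianReal_of_var_ne_zero _ hv, gaussianPDF_def, integrable_withDensity_iff_integrable_smul'
    (by fun_prop) (ae_of_all _ fun _ => ENNReal.ofReal_lt_top)] at hψ
  simpa [ENNReal.toReal_ofReal (gaussianPDFReal_nonneg _ _ _)] using hψ

/-- The paper's `H(t,a;τ,b)`, with `v = τ - t`, `c = ½∫_t^τ f'²`, `p = f'(t)`, `q = f'(τ)` and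
`m = ∫_t^τ f'`. -/
noncomputable def reflectedKernel (v c p q m a b : ℝ) : ℝ :=
  (2 * π * v) ^ (-(1:ℝ)/2) * exp (c - q * b + p * a) *
    (exp (-(b - a - m) ^ 2 / (2 * v)) - exp (-(b + a - m) ^ 2 / (2 * v)))

lemma reflectedKernel_eq {v : ℝ} (hv : 0 < v) (c p q m a b : ℝ) :
    reflectedKernel v c p q m a b = exp (c + p * a) * ((gaussianPDFReal (a + m) v.toNNReal b
        - gaussianPDFReal (m - a) v.toNNReal b) * exp (-q * b)) := by
  have h_rpow : (2 * π * v) ^ (-(1:ℝ)/2) = (√(2 * π * v))⁻¹ := by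
    rw [neg_div, rpow_neg (by positivity), sqrt_eq_rpow, one_div]
  have h_exp : exp (c - q * b + p * a) = exp (c + p * a) * exp (-q * b) := by
    rw [← exp_add]; ring_nf
  simp only [reflectedKernel, gaussianPDFReal, Real.coe_toNNReal _ hv.le, h_rpow, h_exp]
  ring_nf

lemma setIntegral_reflectedKernel_mul_eq {v : ℝ} (hv : 0 < v) (c p q m a : ℝ) {g : ℝ → ℝ}
    (hint : ∀ μ, Integrable (expTiltIoi q g) (gaussianReal μ v.toNNReal)) :
    ∫ b in Ioi 0, reflectedKernel v c p q m a b * g b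
    = exp (c + p * a) * (∫ y, expTiltIoi q g y ∂gaussianReal (a + m) v.toNNReal
        - ∫ y, expTiltIoi q g y ∂gaussianReal (m - a) v.toNNReal) := by
  have hv' : v.toNNReal ≠ 0 := by simpa using hv
  rw [← integral_indicator measurableSet_Ioi,
    integral_gaussianReal_eq_integral_smul hv', integral_gaussianReal_eq_integral_smul hv']
  simp only [smul_eq_mul]
  rw [← integral_sub (integrable_gaussianPDFReal_mul hv' (hint _))
      (integrable_gaussianPDFReal_mul hv' (hint _)), ← integral_const_mul]
  congr 1 with b
  simp only [← sub_mul, expTiltIoi]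
  by_cases hb : b ∈ Ioi 0
  · rw [indicator_of_mem hb, indicator_of_mem hb, reflectedKernel_eq hv]
    ring
  · rw [indicator_of_notMem hb, indicator_of_notMem hb]
    ring

theorem tendsto_setIntegral_reflectedKernel_mul {l : Filter ℝ} [l.IsCountablyGenerated]
    {v m c p : ℝ → ℝ} {q a : ℝ} (hv_pos : ∀ᶠ t in l, 0 < v t) (hv : Tendsto v l (𝓝 0))
    (hm : Tendsto m l (𝓝 0)) (hc : Tendsto c l (𝓝 0)) (hp : Tendsto p l (𝓝 q)) (ha : 0 < a)
    {g : ℝ → ℝ} (hg : ContinuousOn g (Ioi 0)) {M : ℝ} (hM : ∀ b ∈ Ioi 0, |g b| ≤ M) :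
    Tendsto (fun t => ∫ b in Ioi 0, reflectedKernel (v t) (c t) (p t) q (m t) a b * g b)
      l (𝓝 (g a)) := by
  set ψ := expTiltIoi q g
  have hψ_bound : ∀ y, |ψ y| ≤ M * exp (|q| * |y|) := abs_expTiltIoi_le hM
  have h_eq : ∀ᶠ t in l, exp (c t + p t * a) * (∫ y, ψ y ∂gaussianReal (a + m t) (v t).toNNReal
        - ∫ y, ψ y ∂gaussianReal (m t - a) (v t).toNNReal)
      = ∫ b in Ioi 0, reflectedKernel (v t) (c t) (p t) q (m t) a b * g b := by
    filter_upwards [hv_pos] with t ht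
    exact (setIntegral_reflectedKernel_mul_eq ht _ _ _ _ _ fun μ =>
      integrable_gaussianReal_of_abs_le_mul_exp_abs
        (measurable_expTiltIoi hg).aestronglyMeasurable hψ_bound).symm
  have hv' : Tendsto (fun t => (v t).toNNReal) l (𝓝 0) := by
    simpa only [Function.comp_def, Real.toNNReal_zero] using
      (continuous_real_toNNReal.tendsto 0).comp hv
  have h_pos := tendsto_integral_gaussianReal_of_continuousAt
    (by simpa using tendsto_const_nhds.add hm) hv' (measurable_expTiltIoi hg) (abs_nonneg q)
    hψ_bound (continuousAt_expTiltIoi_of_pos hg ha)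
  have h_neg := tendsto_integral_gaussianReal_of_continuousAt
    (by simpa using hm.sub_const a) hv' (measurable_expTiltIoi hg) (abs_nonneg q)
    hψ_bound (continuousAt_expTiltIoi_of_neg (neg_neg_of_pos ha))
  refine Tendsto.congr' h_eq ?_
  convert ((hc.add (hp.mul_const a)).rexp).mul (h_pos.sub h_neg) using 2
  simp [expTiltIoi, ha, not_lt.2 ha.le, ← mul_assoc, ← exp_add]

lemma tendsto_intervalIntegral_left_self {F : ℝ → ℝ} (hF : Continuous F) (τ : ℝ) :
    Tendsto (fun t => ∫ u in t..τ, F u) (𝓝 τ) (𝓝 0) := by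
  have h := (intervalIntegral.continuous_primitive
    (fun _ _ => hF.intervalIntegrable (μ := volume) _ _) τ).tendsto τ
  simpa [intervalIntegral.integral_symm τ] using h.neg

theorem stmt_12_general (f : ℝ → ℝ) (hf : ContDiff ℝ 2 f)
    (H : ℝ → ℝ → ℝ → ℝ → ℝ)
    (hH : ∀ t a τ b : ℝ, 0 ≤ t → t < τ →
      H t a τ b = (2 * Real.pi * (τ - t)) ^ (-(1:ℝ)/2) *
        Real.exp ((1/2) * (∫ u in t..τ, (deriv f u) ^ 2) - deriv f τ * b + deriv f t * a) *
        (Real.exp (-(b - a - ∫ u in t..τ, deriv f u) ^ 2 / (2 * (τ - t)))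
          - Real.exp (-(b + a - ∫ u in t..τ, deriv f u) ^ 2 / (2 * (τ - t)))))
    (τ : ℝ) (a : ℝ) (ha : 0 < a)
    (g : ℝ → ℝ) (hg : ContinuousOn g (Set.Ici 0))
    (hgb : ∃ M : ℝ, ∀ b ∈ Set.Ici (0:ℝ), |g b| ≤ M) :
    Filter.Tendsto (fun t => ∫ b in Set.Ioi (0:ℝ), H t a τ b * g b)
      (nhdsWithin τ (Set.Ico 0 τ)) (nhds (g a)) := by
  obtain ⟨M, hM⟩ := hgb
  have hf' : Continuous (deriv f) := hf.continuous_deriv one_le_two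
  have hl : 𝓝[Ico 0 τ] τ ≤ 𝓝 τ := nhdsWithin_le_nhds
  have hc : Tendsto (fun t => (1/2 : ℝ) * ∫ u in t..τ, deriv f u ^ 2) (𝓝[Ico 0 τ] τ) (𝓝 0) := by
    simpa only [mul_zero] using ((tendsto_intervalIntegral_left_self
      (F := fun u => deriv f u ^ 2) (hf'.pow 2) τ).const_mul (1/2 : ℝ)).mono_left hl
  refine Tendsto.congr' (eventually_nhdsWithin_of_forall fun t ht => ?_)
    (tendsto_setIntegral_reflectedKernel_mul
      (eventually_nhdsWithin_of_forall fun t ht => sub_pos.2 ht.2)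
      (by simpa using ((continuous_sub_left τ).tendsto τ).mono_left hl)
      ((tendsto_intervalIntegral_left_self hf' τ).mono_left hl) hc ((hf'.tendsto τ).mono_left hl)
      ha (hg.mono Ioi_subset_Ici_self) fun b hb => hM b (Ioi_subset_Ici_self hb))
  simp only [hH _ _ _ _ ht.1 ht.2, reflectedKernel]

/-- With `H(t,a;τ,b)` as in the paper, for every `τ > 0`, every `a > 0`, and
every bounded continuous function `g : [0,∞) → ℝ`, the integral `∫₀^∞ H(t,a;τ,b)·g(b) db`
converges to `g(a)` as `t → τ⁻` with `0 ≤ t < τ`. -/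
theorem stmt_12 (f : ℝ → ℝ) (hf : ContDiff ℝ 2 f)
    (H : ℝ → ℝ → ℝ → ℝ → ℝ)
    (hH : ∀ t a τ b : ℝ, 0 ≤ t → t < τ →
      H t a τ b = (2 * Real.pi * (τ - t)) ^ (-(1:ℝ)/2) *
        Real.exp ((1/2) * (∫ u in t..τ, (deriv f u) ^ 2) - deriv f τ * b + deriv f t * a) *
        (Real.exp (-(b - a - ∫ u in t..τ, deriv f u) ^ 2 / (2 * (τ - t)))
          - Real.exp (-(b + a - ∫ u in t..τ, deriv f u) ^ 2 / (2 * (τ - t)))))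
    (τ : ℝ) (hτ : 0 < τ) (a : ℝ) (ha : 0 < a)
    (g : ℝ → ℝ) (hg : ContinuousOn g (Set.Ici 0))
    (hgb : ∃ M : ℝ, ∀ b ∈ Set.Ici (0:ℝ), |g b| ≤ M) :
    Filter.Tendsto (fun t => ∫ b in Set.Ioi (0:ℝ), H t a τ b * g b)
      (nhdsWithin τ (Set.Ico 0 τ)) (nhds (g a)) :=
  stmt_12_general f hf H hH τ a ha g hg hgb
end

section
/- Let f : ℝ → ℝ be twice continuously differentiable and let s > 0. For a > 0 and r > 0 define φ_a(r) := (a/√(2πr³)) · exp(−a²/(2r)). For 0 ≤ t < τ and a, b ∈ ℝ define H(t,a;τ,b) := (2π(τ−t))^{-1/2} · exp( (1/2)∫_t^τ f′(u)² du − f′(τ)·b + f′(t)·a ) · [ exp( −(b − a − ∫_t^τ f′(u) du)²/(2(τ−t)) ) − exp( −(b + a − ∫_t^τ f′(u) du)²/(2(τ−t)) ) ], and for 0 ≤ t < τ < s and a, b > 0 define G(t,a;τ,b) := (φ_b(s−τ)/φ_a(s−t)) · H(t,a;τ,b). Fix t ∈ [0,s) and a > 0. Then the function (τ,b) ↦ G(t,a;τ,b)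 satisfies the Fokker–Planck (forward Kolmogorov) equation ∂_τ G(t,a;τ,b) + f″(τ)·b·G(t,a;τ,b) = (1/2) ∂²_{bb} G(t,a;τ,b) − ∂_b[ (1/b − b/(s−τ))·G(t,a;τ,b) ] for all t < τ < s and b > 0. -/
/-!
Up to the constant `exp (f' t * a) / (2 * π * φ a (s - t))`, `G` is the difference of two
method-of-images terms `k_m(τ, b) = b · (s - τ)^(-3/2) (τ - t)^(-1/2) · exp(-b²/(2(s - τ))
+ ½∫f'² - f'(τ) b - (b - m - ∫f')²/(2(τ - t)))` with `m = a` and `m = -a`.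
Each term solves the linear Fokker–Planck equation on its own: writing `k_m = b · exp R`,
every derivative of `k_m` is `exp R` times a rational expression in `b` and the score `∂_b R`,
and the equation becomes an identity between rational functions.
-/

open Real Filter Topology

theorem inv_sqrt_mul_rpow_eq_exp {x y : ℝ} (hx : 0 < x) (hy : 0 < y) :
    (√(2 * π * x ^ 3))⁻¹ * (2 * π * y) ^ (-(1:ℝ)/2)
      = (2 * π)⁻¹ * exp (-(3 / 2) * log x - 1 / 2 * log y) := by
  have h2π : 0 < 2 * π := by positivity
  rw [sqrt_eq_rpow, rpow_def_of_pos (by positivity), rpow_def_of_pos (by positivity),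
    log_mul h2π.ne' (by positivity), log_mul h2π.ne' hy.ne', log_pow,
    ← exp_log (inv_pos.mpr h2π), log_inv, ← exp_neg, ← exp_add, ← exp_add]
  congr 1
  push_cast
  ring

section ImageKernel

variable (F : ℝ → ℝ) (t s m : ℝ)

-- The prefactor `(s - τ)^(-3/2) (τ - t)^(-1/2)` of `k_m` lives in the exponent as logarithms,
-- and the quadratic terms are divided so that `ring` computes `∂_b` with no side conditions.
noncomputable def imageLogKernel (τ b : ℝ) : ℝ :=
  -(b ^ 2 / (s - τ)) / 2 + (∫ u in t..τ, F u ^ 2) / 2 - F τ * b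
    - (b - m - ∫ u in t..τ, F u) ^ 2 / (τ - t) / 2
    - 3 / 2 * log (s - τ) - 1 / 2 * log (τ - t)

noncomputable def imageKernel (τ b : ℝ) : ℝ :=
  b * exp (imageLogKernel F t s m τ b)

noncomputable def imageScore (τ b : ℝ) : ℝ :=
  -(b / (s - τ)) - F τ - (b - m - ∫ u in t..τ, F u) / (τ - t)

noncomputable def imageKernelSpaceDeriv (τ b : ℝ) : ℝ :=
  (1 + b * imageScore F t s m τ b) * exp (imageLogKernel F t s m τ b)

noncomputable def imageKernelSpaceDeriv2 (τ b : ℝ) : ℝ :=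
  (2 * imageScore F t s m τ b + b * (-(1 / (s - τ)) - 1 / (τ - t))
    + b * imageScore F t s m τ b ^ 2) * exp (imageLogKernel F t s m τ b)

noncomputable def imageKernelTimeDeriv (F' τ b : ℝ) : ℝ :=
  b * (-b ^ 2 / (2 * (s - τ) ^ 2) + F τ ^ 2 / 2 - F' * b
      + (b - m - ∫ u in t..τ, F u) * F τ / (τ - t)
      + (b - m - ∫ u in t..τ, F u) ^ 2 / (2 * (τ - t) ^ 2)
      + 3 / (2 * (s - τ)) - 1 / (2 * (τ - t))) * exp (imageLogKernel F t s m τ b)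

variable {F t s m}

theorem hasDerivAt_imageLogKernel_space (τ b : ℝ) :
    HasDerivAt (imageLogKernel F t s m τ) (imageScore F t s m τ b) b := by
  have hq := ((hasDerivAt_id b).sub_const m).sub_const (∫ u in t..τ, F u)
  have h := (((((hasDerivAt_pow 2 b).div_const (s - τ)).neg.div_const 2).add_const
    ((∫ u in t..τ, F u ^ 2) / 2)).sub ((hasDerivAt_id b).const_mul (F τ))).sub
    (((hq.pow 2).div_const (τ - t)).div_const 2)
  have h' := (h.sub_const (3 / 2 * log (s - τ))).sub_const (1 / 2 * log (τ - t))
  exact h'.congr_deriv (by simp only [imageScore, id]; ring)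

theorem hasDerivAt_imageScore_space (τ b : ℝ) :
    HasDerivAt (imageScore F t s m τ) (-(1 / (s - τ)) - 1 / (τ - t)) b := by
  have hq := ((hasDerivAt_id b).sub_const m).sub_const (∫ u in t..τ, F u)
  have h := (((hasDerivAt_id b).div_const (s - τ)).neg.sub_const (F τ)).sub
    (hq.div_const (τ - t))
  exact h.congr_deriv (by ring)

theorem hasDerivAt_imageKernel_space (τ b : ℝ) :
    HasDerivAt (imageKernel F t s m τ) (imageKernelSpaceDeriv F t s m τ b) b := by
  have h := (hasDerivAt_id b).mul (hasDerivAt_imageLogKernel_space (F := F) (t := t) (s := s)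
    (m := m) τ b).exp
  exact h.congr_deriv (by simp only [imageKernelSpaceDeriv, id]; ring)

theorem hasDerivAt_imageKernelSpaceDeriv_space (τ b : ℝ) :
    HasDerivAt (imageKernelSpaceDeriv F t s m τ) (imageKernelSpaceDeriv2 F t s m τ b) b := by
  have hp := (hasDerivAt_id b).mul (hasDerivAt_imageScore_space (F := F) (t := t) (s := s)
    (m := m) τ b)
  have h := (hp.const_add 1).mul
    (hasDerivAt_imageLogKernel_space (F := F) (t := t) (s := s) (m := m) τ b).exp
  exact h.congr_deriv (by simp only [imageKernelSpaceDeriv2, Pi.mul_apply, id]; ring)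

theorem hasDerivAt_imageLogKernel_time {F' τ : ℝ} (b : ℝ) (hF : Continuous F)
    (hF' : HasDerivAt F F' τ) (htτ : t < τ) (hτs : τ < s) :
    HasDerivAt (fun τ' => imageLogKernel F t s m τ' b)
      (-b ^ 2 / (2 * (s - τ) ^ 2) + F τ ^ 2 / 2 - F' * b
        + (b - m - ∫ u in t..τ, F u) * F τ / (τ - t)
        + (b - m - ∫ u in t..τ, F u) ^ 2 / (2 * (τ - t) ^ 2)
        + 3 / (2 * (s - τ)) - 1 / (2 * (τ - t))) τ := by
  have hsτ : s - τ ≠ 0 := by linarith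
  have hτt : τ - t ≠ 0 := by linarith
  have hI := (hF.integral_hasStrictDerivAt t τ).hasDerivAt
  have hJ := ((hF.pow 2).integral_hasStrictDerivAt t τ).hasDerivAt
  have hs : HasDerivAt (fun τ' => s - τ') (-1) τ := (hasDerivAt_id τ).const_sub s
  have ht : HasDerivAt (fun τ' => τ' - t) 1 τ := (hasDerivAt_id τ).sub_const t
  have h := ((((((hasDerivAt_const τ (b ^ 2)).div hs hsτ).neg.div_const 2).add
      (hJ.div_const 2)).sub (hF'.mul_const b)).sub
    (((((hasDerivAt_const τ (b - m)).sub hI).pow 2).div ht hτt).div_const 2)).sub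
    ((hs.log hsτ).const_mul (3 / 2)) |>.sub ((ht.log hτt).const_mul (1 / 2))
  refine h.congr_deriv ?_
  simp only [Pi.sub_apply, Pi.pow_apply]
  field_simp
  ring

theorem hasDerivAt_imageKernel_time {F' τ : ℝ} (b : ℝ) (hF : Continuous F)
    (hF' : HasDerivAt F F' τ) (htτ : t < τ) (hτs : τ < s) :
    HasDerivAt (fun τ' => imageKernel F t s m τ' b)
      (imageKernelTimeDeriv F t s m F' τ b) τ := by
  have h := ((hasDerivAt_imageLogKernel_time (m := m) b hF hF' htτ hτs).exp).const_mul b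
  exact h.congr_deriv (by simp only [imageKernelTimeDeriv]; ring)

theorem imageKernel_fokkerPlanck (F' τ b : ℝ) (htτ : t < τ) (hτs : τ < s) (hb : b ≠ 0) :
    imageKernelTimeDeriv F t s m F' τ b + F' * b * imageKernel F t s m τ b =
      1 / 2 * imageKernelSpaceDeriv2 F t s m τ b
        - ((-(1 / b ^ 2) - 1 / (s - τ)) * imageKernel F t s m τ b
          + (1 / b - b / (s - τ)) * imageKernelSpaceDeriv F t s m τ b) := by
  have : s - τ ≠ 0 := by linarith
  have : τ - t ≠ 0 := by linarith
  simp only [imageKernelTimeDeriv, imageKernel, imageKernelSpaceDeriv2, imageKernelSpaceDeriv,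
    imageScore]
  field_simp
  ring

theorem fokkerPlanck_of_eqOn_imageKernel_sub {u : ℝ → ℝ → ℝ} (C m₁ m₂ : ℝ) {τ b : ℝ}
    (hu : ∀ τ' ∈ Set.Ioo t s, ∀ b' ∈ Set.Ioi 0,
      u τ' b' = C * (imageKernel F t s m₁ τ' b' - imageKernel F t s m₂ τ' b'))
    (hF : Continuous F) (hF' : DifferentiableAt ℝ F τ) (htτ : t < τ) (hτs : τ < s)
    (hb : 0 < b) :
    deriv (fun τ' => u τ' b) τ + deriv F τ * b * u τ b =
      1 / 2 * deriv (deriv (u τ)) b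
        - deriv (fun b' => (1 / b' - b' / (s - τ)) * u τ b') b := by
  have hτ : Set.Ioo t s ∈ 𝓝 τ := isOpen_Ioo.mem_nhds ⟨htτ, hτs⟩
  have hb' : Set.Ioi 0 ∈ 𝓝 b := isOpen_Ioi.mem_nhds hb
  have huτ : (fun τ' => u τ' b) =ᶠ[𝓝 τ]
      fun τ' => C * (imageKernel F t s m₁ τ' b - imageKernel F t s m₂ τ' b) :=
    eventually_of_mem hτ fun τ' h => hu τ' h b hb
  have hub : u τ =ᶠ[𝓝 b]
      fun b' => C * (imageKernel F t s m₁ τ b' - imageKernel F t s m₂ τ b') :=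
    eventually_of_mem hb' fun b' h => hu τ ⟨htτ, hτs⟩ b' h
  have hFτ := hF'.hasDerivAt
  have hk : ∀ y, HasDerivAt
      (fun b' => C * (imageKernel F t s m₁ τ b' - imageKernel F t s m₂ τ b'))
      (C * (imageKernelSpaceDeriv F t s m₁ τ y - imageKernelSpaceDeriv F t s m₂ τ y)) y :=
    fun y => ((hasDerivAt_imageKernel_space τ y).sub
      (hasDerivAt_imageKernel_space τ y)).const_mul C
  have dτ : deriv (fun τ' => u τ' b) τ = C * (imageKernelTimeDeriv F t s m₁ (deriv F τ) τ b
      - imageKernelTimeDeriv F t s m₂ (deriv F τ) τ b) := by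
    rw [huτ.deriv_eq]
    exact (((hasDerivAt_imageKernel_time b hF hFτ htτ hτs).sub
      (hasDerivAt_imageKernel_time b hF hFτ htτ hτs)).const_mul C).deriv
  have dbb : deriv (deriv (u τ)) b = C * (imageKernelSpaceDeriv2 F t s m₁ τ b
      - imageKernelSpaceDeriv2 F t s m₂ τ b) := by
    rw [(hub.deriv.trans (Eventually.of_forall fun y => (hk y).deriv)).deriv_eq]
    exact (((hasDerivAt_imageKernelSpaceDeriv_space τ b).sub
      (hasDerivAt_imageKernelSpaceDeriv_space τ b)).const_mul C).deriv
  have ddrift : deriv (fun b' => (1 / b' - b' / (s - τ)) * u τ b') b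
      = (-(1 / b ^ 2) - 1 / (s - τ))
          * (C * (imageKernel F t s m₁ τ b - imageKernel F t s m₂ τ b))
        + (1 / b - b / (s - τ))
          * (C * (imageKernelSpaceDeriv F t s m₁ τ b
            - imageKernelSpaceDeriv F t s m₂ τ b)) := by
    have hdrift : (fun b' => (1 / b' - b' / (s - τ)) * u τ b') =ᶠ[𝓝 b] fun b' =>
        (1 / b' - b' / (s - τ))
          * (C * (imageKernel F t s m₁ τ b' - imageKernel F t s m₂ τ b')) :=
      hub.mono fun b' h => congrArg ((1 / b' - b' / (s - τ)) * ·) h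
    rw [hdrift.deriv_eq]
    refine ((((hasDerivAt_const b 1).div (hasDerivAt_id b) hb.ne').sub
      ((hasDerivAt_id b).div_const (s - τ))).mul (hk b)).deriv.trans ?_
    simp only [Pi.div_apply, Pi.sub_apply, id]
    ring
  rw [dτ, dbb, ddrift, hu τ ⟨htτ, hτs⟩ b hb]
  have h₁ := imageKernel_fokkerPlanck (F := F) (m := m₁) (deriv F τ) τ b htτ hτs hb.ne'
  have h₂ := imageKernel_fokkerPlanck (F := F) (m := m₂) (deriv F τ) τ b htτ hτs hb.ne'
  linear_combination C * (h₁ - h₂)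

theorem imageKernel_eq_mul_exp (τ b : ℝ) (htτ : t < τ) (hτs : τ < s) :
    imageKernel F t s m τ b = b * exp (-b ^ 2 / (2 * (s - τ)))
      * exp ((1/2) * (∫ u in t..τ, F u ^ 2) - F τ * b)
      * exp (-(b - m - ∫ u in t..τ, F u) ^ 2 / (2 * (τ - t)))
      * exp (-(3 / 2) * log (s - τ) - 1 / 2 * log (τ - t)) := by
  have : s - τ ≠ 0 := by linarith
  have : τ - t ≠ 0 := by linarith
  simp only [imageKernel, imageLogKernel, mul_assoc, ← exp_add]
  congr 2
  field_simp
  ring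

theorem eq_const_mul_imageKernel_sub {τ : ℝ} (a b c : ℝ) (htτ : t < τ) (hτs : τ < s) :
    b / √(2 * π * (s - τ) ^ 3) * exp (-b ^ 2 / (2 * (s - τ))) / c *
      ((2 * π * (τ - t)) ^ (-(1:ℝ)/2) *
        exp ((1/2) * (∫ u in t..τ, F u ^ 2) - F τ * b + F t * a) *
        (exp (-(b - a - ∫ u in t..τ, F u) ^ 2 / (2 * (τ - t)))
          - exp (-(b + a - ∫ u in t..τ, F u) ^ 2 / (2 * (τ - t)))))
      = exp (F t * a) / (2 * π * c) *
        (imageKernel F t s a τ b - imageKernel F t s (-a) τ b) := by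
  have hprefactor : exp (-(3 / 2) * log (s - τ) - 1 / 2 * log (τ - t))
      = 2 * π * ((√(2 * π * (s - τ) ^ 3))⁻¹ * (2 * π * (τ - t)) ^ (-(1:ℝ)/2)) := by
    rw [inv_sqrt_mul_rpow_eq_exp (by linarith) (by linarith)]
    field_simp
  rw [imageKernel_eq_mul_exp τ b htτ hτs, imageKernel_eq_mul_exp τ b htτ hτs, sub_neg_eq_add,
    exp_add _ (F t * a), hprefactor]
  field_simp

end ImageKernel

theorem stmt_14_general (f : ℝ → ℝ) (hf : ContDiff ℝ 2 f) (s : ℝ)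
    (φ : ℝ → ℝ → ℝ)
    (hφ : ∀ a r : ℝ, 0 < a → 0 < r →
      φ a r = a / Real.sqrt (2 * Real.pi * r ^ 3) * Real.exp (-a ^ 2 / (2 * r)))
    (H : ℝ → ℝ → ℝ → ℝ → ℝ)
    (hH : ∀ t a τ b : ℝ, 0 ≤ t → t < τ →
      H t a τ b = (2 * Real.pi * (τ - t)) ^ (-(1:ℝ)/2) *
        Real.exp ((1/2) * (∫ u in t..τ, (deriv f u) ^ 2) - deriv f τ * b + deriv f t * a) *
        (Real.exp (-(b - a - ∫ u in t..τ, deriv f u) ^ 2 / (2 * (τ - t)))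
          - Real.exp (-(b + a - ∫ u in t..τ, deriv f u) ^ 2 / (2 * (τ - t)))))
    (G : ℝ → ℝ → ℝ → ℝ → ℝ)
    (hG : ∀ t a τ b : ℝ, 0 ≤ t → t < τ → τ < s → 0 < a → 0 < b →
      G t a τ b = φ b (s - τ) / φ a (s - t) * H t a τ b)
    (t : ℝ) (ht : t ∈ Set.Ico 0 s) (a : ℝ) (ha : 0 < a) :
    ∀ τ : ℝ, t < τ → τ < s → ∀ b : ℝ, 0 < b →
      deriv (fun τ' => G t a τ' b) τ + deriv (deriv f) τ * b * G t a τ b =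
        (1/2) * deriv (deriv (fun b' => G t a τ b')) b
          - deriv (fun b' => (1/b' - b'/(s - τ)) * G t a τ b') b := by
  intro τ hτ hτs b hb
  have hf' : ContDiff ℝ 1 (deriv f) := hf.deriv'
  refine fokkerPlanck_of_eqOn_imageKernel_sub (exp (deriv f t * a) / (2 * π * φ a (s - t))) a (-a)
    ?_ hf'.continuous (hf'.differentiable one_ne_zero τ) hτ hτs hb
  rintro τ' ⟨htτ', hτ's⟩ b' hb'
  rw [hG t a τ' b' ht.1 htτ' hτ's ha hb', hH t a τ' b' ht.1 htτ',
    hφ b' (s - τ') hb' (by linarith)]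
  exact eq_const_mul_imageKernel_sub a b' (φ a (s - t)) htτ' hτ's

/-- With `φ_a(r)`, `H(t,a;τ,b)` and `G(t,a;τ,b) = (φ_b(s−τ)/φ_a(s−t))·H`
as in the paper, for fixed `t ∈ [0,s)` and `a > 0` the function `(τ,b) ↦ G(t,a;τ,b)`
satisfies the Fokker–Planck (forward Kolmogorov) equation
`∂_τ G + f″(τ)·b·G = (1/2)∂²_{bb}G − ∂_b[(1/b − b/(s−τ))·G]` for all `t < τ < s`, `b > 0`. -/
theorem stmt_14 (f : ℝ → ℝ) (hf : ContDiff ℝ 2 f) (s : ℝ) (hs : 0 < s)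
    (φ : ℝ → ℝ → ℝ)
    (hφ : ∀ a r : ℝ, 0 < a → 0 < r →
      φ a r = a / Real.sqrt (2 * Real.pi * r ^ 3) * Real.exp (-a ^ 2 / (2 * r)))
    (H : ℝ → ℝ → ℝ → ℝ → ℝ)
    (hH : ∀ t a τ b : ℝ, 0 ≤ t → t < τ →
      H t a τ b = (2 * Real.pi * (τ - t)) ^ (-(1:ℝ)/2) *
        Real.exp ((1/2) * (∫ u in t..τ, (deriv f u) ^ 2) - deriv f τ * b + deriv f t * a) *
        (Real.exp (-(b - a - ∫ u in t..τ, deriv f u) ^ 2 / (2 * (τ - t)))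
          - Real.exp (-(b + a - ∫ u in t..τ, deriv f u) ^ 2 / (2 * (τ - t)))))
    (G : ℝ → ℝ → ℝ → ℝ → ℝ)
    (hG : ∀ t a τ b : ℝ, 0 ≤ t → t < τ → τ < s → 0 < a → 0 < b →
      G t a τ b = φ b (s - τ) / φ a (s - t) * H t a τ b)
    (t : ℝ) (ht : t ∈ Set.Ico 0 s) (a : ℝ) (ha : 0 < a) :
    ∀ τ : ℝ, t < τ → τ < s → ∀ b : ℝ, 0 < b →
      deriv (fun τ' => G t a τ' b) τ + deriv (deriv f) τ * b * G t a τ b =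
        (1/2) * deriv (deriv (fun b' => G t a τ b')) b
          - deriv (fun b' => (1/b' - b'/(s - τ)) * G t a τ b') b :=
  stmt_14_general f hf s φ hφ H hH G hG t ht a ha
end
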